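/- arXiv:1802.07234 — 2 statements merged into one kernel-verified Lean document; each statement's English description precedes it below -/
import Mathlib

section
/- For every natural number δ, the coefficient of q^m in the formal power series (1 - q + q^2 L)^δ / ((1-q)(1-qL)) over ℤ[L] equals ∑_{s=0}^m (-1)^s ∑_{t=0}^δ C(δ,t) C(t, s-t) L^{s-t} (L^{m-s+1} - 1)/(L-1), where the last factor denotes the polynomial ∑_{l=0}^{m-s} L^l. -/
open PowerSeries Polynomial Finset


noncomputable section HW

abbrev RR := Polynomial ℤ

/-- geometric-like coefficients -/
def gG (m : ℕ) : RR := ∑ l ∈ Finset.range (m + 1), (Polynomial.X : RR) ^ l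

def bB (δ s : ℕ) : RR :=
  ∑ t ∈ Finset.range (δ + 1),
    if t ≤ s then Polynomial.C ((δ.choose t * t.choose (s - t) : ℕ) : ℤ) * Polynomial.X ^ (s - t)
    else 0

def BB (δ s : ℕ) : RR := (-1 : RR) ^ s * bB δ s

lemma key1 : (1 - PowerSeries.X) * (1 - PowerSeries.X * PowerSeries.C (R := RR) Polynomial.X) *
    PowerSeries.mk gG = 1 := by
  have h1 : (1 - PowerSeries.X) * PowerSeries.mk gG
      = PowerSeries.mk (fun n => (Polynomial.X : RR) ^ n) := by
    refine PowerSeries.ext fun n => ?_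
    cases n with
    | zero => simp [gG]
    | succ n =>
      simp only [sub_mul, one_mul, map_sub, coeff_succ_X_mul, coeff_mk, gG,
        Finset.sum_range_succ]
      ring
  have h2 : (1 - PowerSeries.X * PowerSeries.C (R := RR) Polynomial.X) *
      PowerSeries.mk (fun n => (Polynomial.X : RR) ^ n) = 1 := by
    refine PowerSeries.ext fun n => ?_
    cases n with
    | zero => simp
    | succ n =>
      simp only [sub_mul, one_mul, map_sub, coeff_mk, PowerSeries.coeff_one, Nat.succ_ne_zero, if_false,
        mul_assoc]
      rw [show PowerSeries.X * (PowerSeries.C (R := RR) Polynomial.X *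
        PowerSeries.mk (fun n => (Polynomial.X : RR) ^ n)) = PowerSeries.X *
        PowerSeries.mk (fun n => Polynomial.X * (Polynomial.X : RR) ^ n) by
          congr 1; ext k; simp]
      rw [coeff_succ_X_mul, coeff_mk]
      ring
  calc (1 - PowerSeries.X) * (1 - PowerSeries.X * PowerSeries.C (R := RR) Polynomial.X) *
      PowerSeries.mk gG
      = (1 - PowerSeries.X * PowerSeries.C (R := RR) Polynomial.X) *
        ((1 - PowerSeries.X) * PowerSeries.mk gG) := by ring
    _ = 1 := by rw [h1, h2]

end HW

noncomputable section HW2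

lemma term_expand (t d : ℕ) :
    ((PowerSeries.X * (PowerSeries.X * PowerSeries.C (R := RR) Polynomial.X + (-1)))) ^ t *
        (1 : PowerSeries RR) ^ (d - t) * (↑(d.choose t) : PowerSeries RR) =
      ∑ j ∈ Finset.range (t + 1),
        PowerSeries.C (R := RR) ((-1 : RR) ^ (t - j) *
            Polynomial.C ((d.choose t * t.choose j : ℕ) : ℤ) * Polynomial.X ^ j) *
          PowerSeries.X ^ (t + j) := by
  rw [one_pow, mul_one, mul_pow, add_pow, Finset.mul_sum, Finset.sum_mul]
  refine Finset.sum_congr rfl fun j hj => ?_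
  simp only [mul_pow, map_pow, map_mul, map_neg, map_one, map_natCast, Polynomial.C_eq_natCast]
  push_cast
  ring

lemma coeff_term (t d m : ℕ) :
    (PowerSeries.coeff (R := RR) m)
        (((PowerSeries.X * (PowerSeries.X * PowerSeries.C (R := RR) Polynomial.X + (-1)))) ^ t *
          (1 : PowerSeries RR) ^ (d - t) * (↑(d.choose t) : PowerSeries RR)) =
      if t ≤ m then
        (-1 : RR) ^ m * (Polynomial.C ((d.choose t * t.choose (m - t) : ℕ) : ℤ) *
          Polynomial.X ^ (m - t))
      else 0 := by
  rw [term_expand, map_sum]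
  simp only [PowerSeries.coeff_C_mul_X_pow]
  by_cases htm : t ≤ m
  · by_cases h2 : m - t ≤ t
    · rw [Finset.sum_eq_single (m - t)]
      · rw [if_pos (by omega), if_pos htm]
        have hpar : (-1 : RR) ^ (t - (m - t)) = (-1 : RR) ^ m := by
          rw [neg_one_pow_eq_pow_mod_two, neg_one_pow_eq_pow_mod_two (n := m)]
          congr 1
          omega
        rw [hpar]
        ring
      · intro j hj hne
        rw [Finset.mem_range] at hj
        rw [if_neg (by omega)]
      · intro h
        exact absurd (Finset.mem_range.mpr (by omega)) h
    · rw [if_pos htm, Nat.choose_eq_zero_of_lt (show t < m - t by omega)]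
      rw [Finset.sum_eq_zero fun j hj => by
        rw [if_neg (by simp at hj; omega)]]
      simp
  · rw [if_neg htm, Finset.sum_eq_zero fun j hj => by rw [if_neg (by omega)]]

lemma key2 (δ : ℕ) : PowerSeries.mk (BB δ) =
    (1 - PowerSeries.X + PowerSeries.X ^ 2 * PowerSeries.C (R := RR) Polynomial.X) ^ δ := by
  have hP : (1 - PowerSeries.X + PowerSeries.X ^ 2 * PowerSeries.C (R := RR) Polynomial.X)
      = (PowerSeries.X * (PowerSeries.X * PowerSeries.C (R := RR) Polynomial.X + (-1))) + 1 := by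
    ring
  rw [hP, add_pow]
  refine PowerSeries.ext fun m => ?_
  rw [map_sum, PowerSeries.coeff_mk]
  simp only [coeff_term]
  rw [BB, bB, Finset.mul_sum]
  refine Finset.sum_congr rfl fun t ht => ?_
  split <;> ring

lemma key3 (δ : ℕ) :
    PowerSeries.mk (fun m : ℕ =>
        ∑ s ∈ Finset.range (m + 1), (-1 : Polynomial ℤ) ^ s *
          (∑ t ∈ Finset.range (δ + 1),
            if t ≤ s then
              Polynomial.C ((δ.choose t * t.choose (s - t) : ℕ) : ℤ) * Polynomial.X ^ (s - t)
            else 0) *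
          (∑ l ∈ Finset.range (m - s + 1), (Polynomial.X : Polynomial ℤ) ^ l)) =
      PowerSeries.mk (BB δ) * PowerSeries.mk gG := by
  refine PowerSeries.ext fun m => ?_
  rw [PowerSeries.coeff_mk, PowerSeries.coeff_mul,
    Finset.Nat.sum_antidiagonal_eq_sum_range_succ_mk]
  refine Finset.sum_congr rfl fun s hs => ?_
  simp only [PowerSeries.coeff_mk, BB, bB, gG]

end HW2

/-- The coefficient of `q^m` in `(1 - q + q²L)^δ / ((1-q)(1-qL))` over `ℤ[L]` equals
`∑_{s=0}^m (-1)^s ∑_{t=0}^δ C(δ,t) C(t,s-t) L^{s-t} ∑_{l=0}^{m-s} L^l`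
(binomials vanishing when `s - t < 0`).  Stated with denominators cleared: the power
series with these coefficients, multiplied by `(1-q)(1-qL)`, equals `(1-q+q²L)^δ`. -/
theorem hilbert_weight_polynomial_coefficient (δ : ℕ) :
    (1 - PowerSeries.X) * (1 - PowerSeries.X * PowerSeries.C (R := Polynomial ℤ) Polynomial.X) *
      PowerSeries.mk (fun m : ℕ =>
        ∑ s ∈ Finset.range (m + 1), (-1 : Polynomial ℤ) ^ s *
          (∑ t ∈ Finset.range (δ + 1),
            if t ≤ s then
              Polynomial.C ((δ.choose t * t.choose (s - t) : ℕ) : ℤ) * Polynomial.X ^ (s - t)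
            else 0) *
          (∑ l ∈ Finset.range (m - s + 1), (Polynomial.X : Polynomial ℤ) ^ l)) =
    (1 - PowerSeries.X + PowerSeries.X ^ 2 * PowerSeries.C (R := Polynomial ℤ) Polynomial.X) ^ δ := by
  rw [key3 δ]
  calc (1 - PowerSeries.X) * (1 - PowerSeries.X * PowerSeries.C (R := Polynomial ℤ) Polynomial.X) *
        (PowerSeries.mk (BB δ) * PowerSeries.mk gG)
      = PowerSeries.mk (BB δ) *
        ((1 - PowerSeries.X) * (1 - PowerSeries.X * PowerSeries.C (R := Polynomial ℤ) Polynomial.X) *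
          PowerSeries.mk gG) := by ring
    _ = PowerSeries.mk (BB δ) := by rw [key1, mul_one]
    _ = _ := key2 δ
end

section
/- For natural numbers m and δ, define I(i, δ) = (-1)^i ∑_{k=0}^{⌊i/2⌋} L^k ∑_{j=0}^{⌊(i-2k)/2⌋} C(δ,j) C(δ-j, i-2k-2j) L^j in ℤ[L]. Then ∑_{i=0}^{m-1} (1 + L^{m-i}) I(i, δ) + I(m, δ) = (1/(1-L)) ∑_{s=0}^m (-1)^s (1 - L^{m-s+1}) ∑_{l=0}^δ C(δ,l) C(l, s-l) L^{s-l}, where the right-hand side is understood as a polynomial identity after multiplying both sides by (1-L). -/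
open Polynomial Finset

/-- `I(i,δ) = (-1)^i ∑_{k=0}^{⌊i/2⌋} L^k ∑_{j=0}^{⌊(i-2k)/2⌋} C(δ,j) C(δ-j, i-2k-2j) L^j`,
the weight polynomial of the monodromy invariants of `S^{i,m} H¹` for a rational
`δ`-nodal curve. -/
noncomputable def Ipoly (i δ : ℕ) : Polynomial ℤ :=
  (-1 : Polynomial ℤ) ^ i *
    ∑ k ∈ Finset.range (i / 2 + 1), Polynomial.X ^ k *
      ∑ j ∈ Finset.range ((i - 2 * k) / 2 + 1),
        Polynomial.C ((δ.choose j * (δ - j).choose (i - 2 * k - 2 * j) : ℕ) : ℤ) *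
          Polynomial.X ^ j

noncomputable def Apoly (δ n : ℕ) : Polynomial ℤ :=
  ∑ j ∈ Finset.range (n / 2 + 1),
    Polynomial.C ((δ.choose j * (δ - j).choose (n - 2 * j) : ℕ) : ℤ) * Polynomial.X ^ j

lemma rhs_inner (δ s : ℕ) :
    (∑ l ∈ Finset.range (δ + 1),
        if l ≤ s then
          Polynomial.C ((δ.choose l * l.choose (s - l) : ℕ) : ℤ) * Polynomial.X ^ (s - l)
        else 0)
      = Apoly δ s := by
  rw [← Finset.sum_filter]
  have hA : ∑ l ∈ (Finset.range (δ + 1)).filter (fun l => l ≤ s),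
        Polynomial.C ((δ.choose l * l.choose (s - l) : ℕ) : ℤ) * Polynomial.X ^ (s - l)
      = ∑ l ∈ (Finset.range (δ + 1)).filter (fun l => l ≤ s ∧ s ≤ 2 * l),
        Polynomial.C ((δ.choose l * l.choose (s - l) : ℕ) : ℤ) * Polynomial.X ^ (s - l) := by
    refine (Finset.sum_subset ?_ ?_).symm
    · intro l hl
      simp only [Finset.mem_filter, Finset.mem_range] at hl ⊢
      exact ⟨hl.1, hl.2.1⟩
    · intro l hl hl2
      simp only [Finset.mem_filter, Finset.mem_range] at hl hl2
      have : l.choose (s - l) = 0 := Nat.choose_eq_zero_of_lt (by omega)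
      simp [this]
  have hB : Apoly δ s
      = ∑ j ∈ (Finset.range (s / 2 + 1)).filter (fun j => s - j ≤ δ),
        Polynomial.C ((δ.choose j * (δ - j).choose (s - 2 * j) : ℕ) : ℤ) * Polynomial.X ^ j := by
    rw [Apoly]
    refine (Finset.sum_subset ?_ ?_).symm
    · intro j hj
      simp only [Finset.mem_filter, Finset.mem_range] at hj ⊢
      exact hj.1
    · intro j hj hj2
      simp only [Finset.mem_filter, Finset.mem_range] at hj hj2
      have hd : s - j > δ := by omega
      rcases le_or_gt j δ with hc | hc
      · have : (δ - j).choose (s - 2 * j) = 0 := Nat.choose_eq_zero_of_lt (by omega)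
        simp [this]
      · have : δ.choose j = 0 := Nat.choose_eq_zero_of_lt hc
        simp [this]
  rw [hA, hB]
  refine Finset.sum_nbij' (fun l => s - l) (fun j => s - j) ?_ ?_ ?_ ?_ ?_
  · intro l hl
    simp only [Finset.mem_filter, Finset.mem_range] at hl ⊢
    omega
  · intro j hj
    simp only [Finset.mem_filter, Finset.mem_range] at hj ⊢
    omega
  · intro l hl
    simp only [Finset.mem_filter, Finset.mem_range] at hl
    omega
  · intro j hj
    simp only [Finset.mem_filter, Finset.mem_range] at hj
    omega
  · intro l hl
    simp only [Finset.mem_filter, Finset.mem_range] at hl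
    have h1 : δ.choose l * l.choose (s - l) = δ.choose (s - l) * (δ - (s - l)).choose (s - 2 * (s - l)) := by
      have := Nat.choose_mul (n := δ) (k := l) (s := s - l) (by omega)
      rw [this]
      congr 1
      congr 1
      omega
    rw [h1]

lemma swap_sum (M : ℕ) (f : ℕ → ℕ → Polynomial ℤ) :
    ∑ i ∈ Finset.range M, ∑ k ∈ Finset.range (i / 2 + 1), f i k
      = ∑ n ∈ Finset.range M, ∑ k ∈ Finset.range ((M - 1 - n) / 2 + 1), f (n + 2 * k) k := by
  rw [Finset.sum_sigma', Finset.sum_sigma']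
  refine Finset.sum_nbij' (fun x => ⟨x.1 - 2 * x.2, x.2⟩) (fun x => ⟨x.1 + 2 * x.2, x.2⟩)
    ?_ ?_ ?_ ?_ ?_
  · rintro ⟨a, b⟩ h
    simp only [Finset.mem_sigma, Finset.mem_range] at h ⊢
    omega
  · rintro ⟨a, b⟩ h
    simp only [Finset.mem_sigma, Finset.mem_range] at h ⊢
    omega
  · rintro ⟨a, b⟩ h
    simp only [Finset.mem_sigma, Finset.mem_range] at h
    dsimp only at h ⊢
    exact congrArg (fun t => (⟨t, b⟩ : (_ : ℕ) × ℕ)) (by omega)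
  · rintro ⟨a, b⟩ h
    simp only [Finset.mem_sigma, Finset.mem_range] at h
    dsimp only at h ⊢
    exact congrArg (fun t => (⟨t, b⟩ : (_ : ℕ) × ℕ)) (by omega)
  · rintro ⟨a, b⟩ h
    simp only [Finset.mem_sigma, Finset.mem_range] at h
    dsimp only at h ⊢
    congr 2
    omega

lemma one_sub_X_mul_geom (N : ℕ) :
    (1 - (Polynomial.X : Polynomial ℤ)) * ∑ k ∈ Finset.range N, Polynomial.X ^ k
      = 1 - Polynomial.X ^ N := by
  linear_combination (-1 : Polynomial ℤ) * geom_sum_mul (Polynomial.X : Polynomial ℤ) N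

lemma one_sub_X_mul_geom' (N d : ℕ) (h : N ≤ d + 1) :
    (1 - (Polynomial.X : Polynomial ℤ)) * ∑ k ∈ Finset.range N, Polynomial.X ^ (d - k)
      = Polynomial.X ^ (d + 1 - N) - Polynomial.X ^ (d + 1) := by
  have h1 : ∑ k ∈ Finset.range N, (Polynomial.X : Polynomial ℤ) ^ (d - k)
      = Polynomial.X ^ (d + 1 - N) * ∑ k ∈ Finset.range N, Polynomial.X ^ k := by
    rw [Finset.mul_sum, ← Finset.sum_range_reflect]
    refine Finset.sum_congr rfl fun k hk => ?_
    simp only [Finset.mem_range] at hk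
    rw [← pow_add]
    congr 1
    omega
  rw [h1, ← mul_assoc, mul_comm (1 - (Polynomial.X : Polynomial ℤ)), mul_assoc,
    one_sub_X_mul_geom, mul_sub, mul_one, ← pow_add]
  congr 2
  omega

lemma Ipoly_eq (i δ : ℕ) :
    Ipoly i δ = ∑ k ∈ Finset.range (i / 2 + 1),
      (-1 : Polynomial ℤ) ^ i * Polynomial.X ^ k * Apoly δ (i - 2 * k) := by
  rw [Ipoly, Finset.mul_sum]
  refine Finset.sum_congr rfl fun k _ => ?_
  rw [Apoly, mul_assoc]

/-- Proposition 5.1(i): `w(ℍ^m) = w(C^{[m]})`, i.e.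
`∑_{i=0}^{m-1} (1+L^{m-i}) I(i,δ) + I(m,δ)
  = (1/(1-L)) ∑_{s=0}^m (-1)^s (1-L^{m-s+1}) ∑_{l=0}^δ C(δ,l) C(l,s-l) L^{s-l}`,
stated after multiplying both sides by `(1-L)`. -/
theorem weight_polynomial_hilbert (m δ : ℕ) :
    (1 - Polynomial.X) *
        (∑ i ∈ Finset.range m, (1 + Polynomial.X ^ (m - i)) * Ipoly i δ + Ipoly m δ) =
      ∑ s ∈ Finset.range (m + 1), (-1 : Polynomial ℤ) ^ s *
        (1 - Polynomial.X ^ (m - s + 1)) *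
        ∑ l ∈ Finset.range (δ + 1),
          if l ≤ s then
            Polynomial.C ((δ.choose l * l.choose (s - l) : ℕ) : ℤ) * Polynomial.X ^ (s - l)
          else 0 := by
  have hrhs : (∑ s ∈ Finset.range (m + 1), (-1 : Polynomial ℤ) ^ s *
        (1 - Polynomial.X ^ (m - s + 1)) *
        ∑ l ∈ Finset.range (δ + 1),
          if l ≤ s then
            Polynomial.C ((δ.choose l * l.choose (s - l) : ℕ) : ℤ) * Polynomial.X ^ (s - l)
          else 0)
      = ∑ s ∈ Finset.range (m + 1), (-1 : Polynomial ℤ) ^ s *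
          (1 - Polynomial.X ^ (m - s + 1)) * Apoly δ s :=
    Finset.sum_congr rfl fun s _ => by rw [rhs_inner]
  rw [hrhs]
  -- split LHS
  have h0 : ∑ i ∈ Finset.range m, (1 + Polynomial.X ^ (m - i)) * Ipoly i δ + Ipoly m δ
      = (∑ i ∈ Finset.range (m + 1), Ipoly i δ)
        + ∑ i ∈ Finset.range m, Polynomial.X ^ (m - i) * Ipoly i δ := by
    simp only [add_mul, one_mul, Finset.sum_add_distrib, Finset.sum_range_succ]
    ring
  have hS1 : ∑ i ∈ Finset.range (m + 1), Ipoly i δ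
      = ∑ n ∈ Finset.range (m + 1), ((-1 : Polynomial ℤ) ^ n * Apoly δ n)
          * ∑ k ∈ Finset.range ((m - n) / 2 + 1), Polynomial.X ^ k := by
    calc ∑ i ∈ Finset.range (m + 1), Ipoly i δ
        = ∑ i ∈ Finset.range (m + 1), ∑ k ∈ Finset.range (i / 2 + 1),
            (-1 : Polynomial ℤ) ^ i * Polynomial.X ^ k * Apoly δ (i - 2 * k) :=
          Finset.sum_congr rfl fun i _ => Ipoly_eq i δ
      _ = ∑ n ∈ Finset.range (m + 1), ∑ k ∈ Finset.range ((m + 1 - 1 - n) / 2 + 1),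
            (-1 : Polynomial ℤ) ^ (n + 2 * k) * Polynomial.X ^ k * Apoly δ (n + 2 * k - 2 * k) :=
          swap_sum (m + 1) _
      _ = _ := by
          refine Finset.sum_congr rfl fun n hn => ?_
          have hmn : m + 1 - 1 - n = m - n := by omega
          rw [hmn, Finset.mul_sum]
          refine Finset.sum_congr rfl fun k hk => ?_
          have h1 : n + 2 * k - 2 * k = n := by omega
          rw [h1, pow_add, pow_mul, neg_one_sq, one_pow, mul_one]
          ring
  have hS2 : ∑ i ∈ Finset.range m, Polynomial.X ^ (m - i) * Ipoly i δ
      = ∑ n ∈ Finset.range m, ((-1 : Polynomial ℤ) ^ n * Apoly δ n)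
          * ∑ k ∈ Finset.range ((m - 1 - n) / 2 + 1), Polynomial.X ^ (m - n - k) := by
    calc ∑ i ∈ Finset.range m, Polynomial.X ^ (m - i) * Ipoly i δ
        = ∑ i ∈ Finset.range m, ∑ k ∈ Finset.range (i / 2 + 1),
            Polynomial.X ^ (m - i) * ((-1 : Polynomial ℤ) ^ i * Polynomial.X ^ k * Apoly δ (i - 2 * k)) := by
          refine Finset.sum_congr rfl fun i _ => ?_
          rw [Ipoly_eq i δ, Finset.mul_sum]
      _ = ∑ n ∈ Finset.range m, ∑ k ∈ Finset.range ((m - 1 - n) / 2 + 1),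
            Polynomial.X ^ (m - (n + 2 * k)) *
              ((-1 : Polynomial ℤ) ^ (n + 2 * k) * Polynomial.X ^ k * Apoly δ (n + 2 * k - 2 * k)) :=
          swap_sum m _
      _ = _ := by
          refine Finset.sum_congr rfl fun n hn => ?_
          rw [Finset.mul_sum]
          refine Finset.sum_congr rfl fun k hk => ?_
          simp only [Finset.mem_range] at hn hk
          have h1 : n + 2 * k - 2 * k = n := by omega
          have e1 : m - (n + 2 * k) + k = m - n - k := by omega
          calc Polynomial.X ^ (m - (n + 2 * k)) *
                ((-1 : Polynomial ℤ) ^ (n + 2 * k) * Polynomial.X ^ k * Apoly δ (n + 2 * k - 2 * k))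
              = (-1 : Polynomial ℤ) ^ (n + 2 * k) * Apoly δ n
                  * (Polynomial.X ^ (m - (n + 2 * k)) * Polynomial.X ^ k) := by rw [h1]; ring
            _ = ((-1 : Polynomial ℤ) ^ n * Apoly δ n) * Polynomial.X ^ (m - n - k) := by
                rw [← pow_add, e1, pow_add (-1 : Polynomial ℤ), pow_mul, neg_one_sq, one_pow, mul_one]
  rw [h0, hS1, hS2, mul_add, Finset.mul_sum, Finset.mul_sum]
  have hT1 : ∀ n ∈ Finset.range (m + 1),
      (1 - Polynomial.X) * (((-1 : Polynomial ℤ) ^ n * Apoly δ n)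
          * ∑ k ∈ Finset.range ((m - n) / 2 + 1), Polynomial.X ^ k)
        = (-1 : Polynomial ℤ) ^ n * (1 - Polynomial.X ^ ((m - n) / 2 + 1)) * Apoly δ n := by
    intro n _
    calc (1 - Polynomial.X) * (((-1 : Polynomial ℤ) ^ n * Apoly δ n)
          * ∑ k ∈ Finset.range ((m - n) / 2 + 1), Polynomial.X ^ k)
        = ((-1 : Polynomial ℤ) ^ n * Apoly δ n)
            * ((1 - Polynomial.X) * ∑ k ∈ Finset.range ((m - n) / 2 + 1), Polynomial.X ^ k) := by ring
      _ = _ := by rw [one_sub_X_mul_geom]; ring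
  have hT2 : ∀ n ∈ Finset.range m,
      (1 - Polynomial.X) * (((-1 : Polynomial ℤ) ^ n * Apoly δ n)
          * ∑ k ∈ Finset.range ((m - 1 - n) / 2 + 1), Polynomial.X ^ (m - n - k))
        = (-1 : Polynomial ℤ) ^ n * (Polynomial.X ^ ((m - n) / 2 + 1) - Polynomial.X ^ (m - n + 1)) * Apoly δ n := by
    intro n hn
    simp only [Finset.mem_range] at hn
    have hle : (m - 1 - n) / 2 + 1 ≤ (m - n) + 1 := by omega
    have hg := one_sub_X_mul_geom' ((m - 1 - n) / 2 + 1) (m - n) hle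
    have e2 : m - n + 1 - ((m - 1 - n) / 2 + 1) = (m - n) / 2 + 1 := by omega
    calc (1 - Polynomial.X) * (((-1 : Polynomial ℤ) ^ n * Apoly δ n)
          * ∑ k ∈ Finset.range ((m - 1 - n) / 2 + 1), Polynomial.X ^ (m - n - k))
        = ((-1 : Polynomial ℤ) ^ n * Apoly δ n)
            * ((1 - Polynomial.X) * ∑ k ∈ Finset.range ((m - 1 - n) / 2 + 1), Polynomial.X ^ (m - n - k)) := by
          ring
      _ = _ := by rw [hg, e2]; ring
  rw [Finset.sum_congr rfl hT1, Finset.sum_congr rfl hT2]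
  rw [Finset.sum_range_succ, Finset.sum_range_succ (fun s => (-1 : Polynomial ℤ) ^ s * (1 - Polynomial.X ^ (m - s + 1)) * Apoly δ s)]
  have hm : (m - m) / 2 + 1 = m - m + 1 := by omega
  rw [hm, add_right_comm, ← Finset.sum_add_distrib]
  congr 1
  refine Finset.sum_congr rfl fun n _ => ?_
  ring
end
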